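/- Let p be an odd prime. Then every vertex [ν,ω] of Π_p with ω ≠ 0 is adjacent to exactly one vertex of the principal axis A_princ = {[i,0] : 1 ≤ i ≤ (p−1)/2}. Consequently, the vertex set of Π_p is partitioned into the (p−1)/2 wheels W_i = {[i,0]} ∪ ∂W_i, each containing p+1 vertices. -/

import Mathlib

/-- Pairs `(λ, μ) ∈ (ℤ/N)²` with `gcd(λ, μ, N) = 1`. -/
abbrev PlatonicPair (N : ℕ) : Type :=
  {x : ZMod N × ZMod N // Nat.gcd (Nat.gcd x.1.val x.2.val) N = 1}

/-- Identify `(λ,μ)` with `(-λ,-μ)`. -/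
instance platonicSetoid (N : ℕ) : Setoid (PlatonicPair N) where
  r x y := y.val = x.val ∨ y.val = -x.val
  iseqv := by
    refine ⟨fun _ => Or.inl rfl, ?_, ?_⟩
    · rintro x y (h | h)
      · exact Or.inl h.symm
      · right; rw [h, neg_neg]
    · rintro x y z (h1 | h1) (h2 | h2)
      · exact Or.inl (h2.trans h1)
      · right; rw [h2, h1]
      · right; rw [h2, h1]
      · left; rw [h2, h1, neg_neg]

/-- Vertices of the Platonic graph: classes `[λ,μ] = {(λ,μ), (-λ,-μ)}`. -/
abbrev PlatonicVertex (N : ℕ) : Type := Quotient (platonicSetoid N)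

/-- The Platonic graph `Π_N`: distinct classes `[λ,μ]`, `[ν,ω]` are adjacent
iff `λω - μν = ±1` in `ℤ/N`. -/
def Platonic (N : ℕ) : SimpleGraph (PlatonicVertex N) where
  Adj a b := a ≠ b ∧ ∃ x y : PlatonicPair N, ⟦x⟧ = a ∧ ⟦y⟧ = b ∧
    (x.val.1 * y.val.2 - x.val.2 * y.val.1 = 1 ∨
     x.val.1 * y.val.2 - x.val.2 * y.val.1 = -1)
  symm := ⟨by
    rintro a b ⟨hne, x, y, hx, hy, hdet⟩
    refine ⟨hne.symm, y, x, hy, hx, ?_⟩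
    rcases hdet with h | h
    · right; linear_combination -h
    · left; linear_combination -h⟩
  loopless := ⟨fun a h => h.1 rfl⟩

instance platonicDecRel (N : ℕ) :
    DecidableRel (α := PlatonicPair N) (· ≈ ·) := fun x y =>
  inferInstanceAs (Decidable (y.val = x.val ∨ y.val = -x.val))

instance (N : ℕ) : DecidableEq (PlatonicVertex N) :=
  @Quotient.decidableEq _ _ (platonicDecRel N)

instance (N : ℕ) [NeZero N] : Fintype (PlatonicVertex N) :=
  Quotient.fintype _

instance platonicAdjDec (N : ℕ) [NeZero N] : DecidableRel (Platonic N).Adj := fun a b =>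
  inferInstanceAs (Decidable (a ≠ b ∧ ∃ x y : PlatonicPair N, ⟦x⟧ = a ∧ ⟦y⟧ = b ∧
    (x.val.1 * y.val.2 - x.val.2 * y.val.1 = 1 ∨
     x.val.1 * y.val.2 - x.val.2 * y.val.1 = -1)))

/-- The class of `(λ,μ)` has nonvanishing second coordinate. -/
def secondNZ (N : ℕ) (v : PlatonicVertex N) : Prop :=
  ∀ x : PlatonicPair N, ⟦x⟧ = v → x.val.2 ≠ 0

instance (N : ℕ) [NeZero N] : DecidablePred (secondNZ N) := fun _ =>
  Fintype.decidableForallFintype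

/-- The modified Platonic graph `Π_p'`: induced subgraph of `Π_p` on the classes
`[λ,μ]` with `μ ≠ 0`. -/
def ModPlatonic (N : ℕ) : SimpleGraph {v : PlatonicVertex N | secondNZ N v} :=
  SimpleGraph.induce {v : PlatonicVertex N | secondNZ N v} (Platonic N)

instance (N : ℕ) [NeZero N] : DecidableRel (ModPlatonic N).Adj := fun a b =>
  inferInstanceAs (Decidable ((Platonic N).Adj a b))

/-! A vertex `[ν, ω]` and an axis vertex `[c, 0]` are adjacent exactly when `ωc = ±1`. So for
`ω ≠ 0` the only axis neighbour of `[ν, ω]` is `[ω⁻¹, 0]`, and the neighbours of `[c, 0]` are the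
`p` distinct classes `[t, c⁻¹]`. The axis is the image of `c ↦ [c, 0]` on `(ℤ/p)ˣ`, a map whose
fibres `{c, -c}` have two elements because `p` is odd. -/

open Finset

section Determinant

variable {R : Type*} [CommRing R]

def pairDet (v w : R × R) : R := v.1 * w.2 - v.2 * w.1

@[simp]
lemma pairDet_neg_left (v w : R × R) : pairDet (-v) w = -pairDet v w := by
  simp only [pairDet, Prod.fst_neg, Prod.snd_neg]
  ring

@[simp]
lemma pairDet_neg_right (v w : R × R) : pairDet v (-w) = -pairDet v w := by
  simp only [pairDet, Prod.fst_neg, Prod.snd_neg]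
  ring

lemma neg_eq_one_or_neg_eq_neg_one_iff {a : R} : (-a = 1 ∨ -a = -1) ↔ (a = 1 ∨ a = -1) := by
  rw [neg_eq_iff_eq_neg, neg_inj, or_comm]

lemma mul_eq_one_or_mul_eq_neg_one_iff {K : Type*} [Field K] {a b : K} (ha : a ≠ 0) :
    (a * b = 1 ∨ a * b = -1) ↔ (b = a⁻¹ ∨ b = -a⁻¹) := by
  constructor
  · rintro (h | h)
    · exact Or.inl (eq_inv_of_mul_eq_one_right h)
    · exact Or.inr (by field_simp; linear_combination h)
  · rintro (rfl | rfl) <;> simp [ha]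

end Determinant

section Platonic

variable {N : ℕ}

lemma PlatonicPair.val_ne_zero (hN : N ≠ 1) (x : PlatonicPair N) : x.val ≠ 0 :=
  fun h => hN (by simpa [h] using x.prop)

lemma platonic_adj_mk_iff (x y : PlatonicPair N) :
    (Platonic N).Adj ⟦x⟧ ⟦y⟧ ↔
      (⟦x⟧ : PlatonicVertex N) ≠ ⟦y⟧ ∧ (pairDet x.val y.val = 1 ∨ pairDet x.val y.val = -1) := by
  refine ⟨fun ⟨hne, x', y', hx, hy, hdet⟩ => ⟨hne, ?_⟩,
    fun ⟨hne, hdet⟩ => ⟨hne, x, y, rfl, rfl, hdet⟩⟩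
  change pairDet x'.val y'.val = 1 ∨ pairDet x'.val y'.val = -1 at hdet
  rcases Quotient.exact hx with hx | hx <;> rcases Quotient.exact hy with hy | hy <;>
    simpa only [hx, hy, pairDet_neg_left, pairDet_neg_right, neg_neg,
      neg_eq_one_or_neg_eq_neg_one_iff] using hdet

def OnPrincipalAxis (a : PlatonicVertex N) : Prop :=
  ∃ x : PlatonicPair N, ⟦x⟧ = a ∧ x.val.2 = 0

instance [NeZero N] : DecidablePred (OnPrincipalAxis (N := N)) := fun a =>
  inferInstanceAs (Decidable (∃ x : PlatonicPair N, ⟦x⟧ = a ∧ x.val.2 = 0))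

end Platonic

section Prime

variable {p : ℕ} [Fact p.Prime]

lemma gcd_gcd_val_eq_one_of_ne_zero {v : ZMod p × ZMod p} (hv : v ≠ 0) :
    Nat.gcd (Nat.gcd v.1.val v.2.val) p = 1 := by
  rw [Nat.gcd_comm]
  refine (Nat.Prime.coprime_iff_not_dvd (Fact.out : p.Prime)).2 fun hdvd => hv (Prod.ext ?_ ?_)
  · simpa using (ZMod.natCast_eq_zero_iff _ p).2 (hdvd.trans (Nat.gcd_dvd_left _ _))
  · simpa using (ZMod.natCast_eq_zero_iff _ p).2 (hdvd.trans (Nat.gcd_dvd_right _ _))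

def platonicMk (v : ZMod p × ZMod p) (hv : v ≠ 0) : PlatonicVertex p :=
  ⟦⟨v, gcd_gcd_val_eq_one_of_ne_zero hv⟩⟧

lemma platonicMk_eq_platonicMk_iff {v w : ZMod p × ZMod p} {hv : v ≠ 0} {hw : w ≠ 0} :
    platonicMk v hv = platonicMk w hw ↔ w = v ∨ w = -v :=
  Quotient.eq

lemma exists_platonicMk_eq (a : PlatonicVertex p) : ∃ v hv, platonicMk v hv = a := by
  obtain ⟨x, rfl⟩ := Quotient.exists_rep a
  exact ⟨x.val, x.val_ne_zero (Fact.out : p.Prime).ne_one, rfl⟩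

lemma platonic_adj_platonicMk_iff {v w : ZMod p × ZMod p} {hv : v ≠ 0} {hw : w ≠ 0} :
    (Platonic p).Adj (platonicMk v hv) (platonicMk w hw) ↔
      platonicMk v hv ≠ platonicMk w hw ∧ (pairDet v w = 1 ∨ pairDet v w = -1) :=
  platonic_adj_mk_iff _ _

def axisVertex (c : (ZMod p)ˣ) : PlatonicVertex p :=
  platonicMk ((c : ZMod p), 0) (by simp)

lemma onPrincipalAxis_iff {a : PlatonicVertex p} : OnPrincipalAxis a ↔ ∃ c, axisVertex c = a := by
  constructor
  · rintro ⟨x, rfl, hx⟩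
    have hx1 : x.val.1 ≠ 0 := fun h => x.val_ne_zero (Fact.out : p.Prime).ne_one (Prod.ext h hx)
    exact ⟨Units.mk0 _ hx1, Quotient.sound (Or.inl (Prod.ext rfl hx))⟩
  · rintro ⟨c, rfl⟩
    exact ⟨_, rfl, rfl⟩

lemma axisVertex_eq_axisVertex_iff {c c' : (ZMod p)ˣ} :
    axisVertex c = axisVertex c' ↔ c' = c ∨ c' = -c := by
  rw [axisVertex, axisVertex, platonicMk_eq_platonicMk_iff]
  simp only [Prod.ext_iff, Units.ext_iff, Prod.fst_neg, Prod.snd_neg, neg_zero, Units.val_neg,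
    and_true]

lemma platonic_adj_axisVertex_iff {v : ZMod p × ZMod p} {hv : v ≠ 0} {c : (ZMod p)ˣ} :
    (Platonic p).Adj (platonicMk v hv) (axisVertex c) ↔ v.2 * c = 1 ∨ v.2 * c = -1 := by
  have hdet : pairDet v ((c : ZMod p), 0) = -(v.2 * c) := by simp [pairDet]
  rw [axisVertex, platonic_adj_platonicMk_iff, hdet, neg_eq_one_or_neg_eq_neg_one_iff]
  refine ⟨And.right, fun h => ⟨fun heq => ?_, h⟩⟩
  have hv2 : v.2 = 0 := by
    rcases platonicMk_eq_platonicMk_iff.1 heq with heq | heq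
    · exact (congrArg Prod.snd heq).symm
    · exact neg_eq_zero.1 (congrArg Prod.snd heq).symm
  rcases h with h | h <;> simp [hv2] at h

theorem existsUnique_onPrincipalAxis_adj (v : PlatonicVertex p) (hv : secondNZ p v) :
    ∃! a, OnPrincipalAxis a ∧ (Platonic p).Adj v a := by
  obtain ⟨v, hv0, rfl⟩ := exists_platonicMk_eq v
  have hω : v.2 ≠ 0 := hv _ rfl
  refine ⟨axisVertex (Units.mk0 _ (inv_ne_zero hω)),
    ⟨onPrincipalAxis_iff.2 ⟨_, rfl⟩, platonic_adj_axisVertex_iff.2 (Or.inl (mul_inv_cancel₀ hω))⟩,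
    ?_⟩
  rintro _ ⟨ha, hadj⟩
  obtain ⟨c, rfl⟩ := onPrincipalAxis_iff.1 ha
  rw [platonic_adj_axisVertex_iff, mul_eq_one_or_mul_eq_neg_one_iff hω] at hadj
  exact (axisVertex_eq_axisVertex_iff.2 (by simpa [Units.ext_iff] using hadj)).symm

theorem card_filter_onPrincipalAxis (hodd : Odd p) :
    (univ.filter (OnPrincipalAxis (N := p))).card = (p - 1) / 2 := by
  have himage : univ.filter (OnPrincipalAxis (N := p)) = univ.image axisVertex := by
    ext a
    simp [onPrincipalAxis_iff]
  have hfibre :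
      ∀ b ∈ univ.image axisVertex, (univ.filter (axisVertex (p := p) · = b)).card = 2 := by
    simp only [mem_image, mem_univ, true_and]
    rintro _ ⟨c, rfl⟩
    have hc : c ≠ -c := fun h => ZMod.ne_neg_self hodd c.ne_zero (congrArg Units.val h)
    rw [← card_pair hc]
    congr 1
    ext c'
    simp [axisVertex_eq_axisVertex_iff, eq_comm]
  have hcard := card_eq_sum_card_image (axisVertex (p := p)) univ
  rw [sum_const_nat hfibre, card_univ, ZMod.card_units] at hcard
  rw [himage]
  omega

def boundaryVertex (c : (ZMod p)ˣ) (t : ZMod p) : PlatonicVertex p :=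
  platonicMk (t, (c : ZMod p)⁻¹) fun h => inv_ne_zero c.ne_zero (congrArg Prod.snd h)

lemma neighborFinset_axisVertex (c : (ZMod p)ˣ) :
    (Platonic p).neighborFinset (axisVertex c) = univ.image (boundaryVertex c) := by
  ext b
  obtain ⟨v, hv, rfl⟩ := exists_platonicMk_eq b
  rw [SimpleGraph.mem_neighborFinset, SimpleGraph.adj_comm, platonic_adj_axisVertex_iff, mul_comm,
    mul_eq_one_or_mul_eq_neg_one_iff c.ne_zero]
  simp only [mem_image, mem_univ, true_and, boundaryVertex, platonicMk_eq_platonicMk_iff]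
  constructor
  · rintro (h | h)
    · exact ⟨v.1, Or.inl (Prod.ext rfl h)⟩
    · exact ⟨-v.1, Or.inr (Prod.ext (neg_neg _).symm h)⟩
  · rintro ⟨t, rfl | rfl⟩
    · exact Or.inl rfl
    · exact Or.inr rfl

lemma boundaryVertex_injective (hodd : Odd p) (c : (ZMod p)ˣ) :
    Function.Injective (boundaryVertex c) := by
  intro t t' h
  rcases platonicMk_eq_platonicMk_iff.1 h with h | h
  · exact (congrArg Prod.fst h).symm
  · exact absurd (congrArg Prod.snd h) (ZMod.ne_neg_self hodd (inv_ne_zero c.ne_zero))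

theorem card_insert_neighborFinset_axisVertex (hodd : Odd p) (c : (ZMod p)ˣ) :
    (insert (axisVertex c) ((Platonic p).neighborFinset (axisVertex c))).card = p + 1 := by
  rw [card_insert_of_notMem (by simp), neighborFinset_axisVertex,
    card_image_of_injective _ (boundaryVertex_injective hodd c), card_univ, ZMod.card]

end Prime

/-- Every vertex `[ν,ω]` of `Π_p` with `ω ≠ 0` is adjacent to exactly one vertex of
the principal axis `{[i,0]}`.  Consequently, the vertex set of `Π_p` is partitioned
into the `(p-1)/2` wheels `W_i = {[i,0]} ∪ ∂W_i`, each containing `p+1` vertices. -/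
theorem platonic_wheel_partition (p : ℕ) (hp : p.Prime) (hodd : Odd p) [NeZero p] :
    (∀ v : PlatonicVertex p, secondNZ p v →
      ∃! a : PlatonicVertex p,
        (∃ x : PlatonicPair p, ⟦x⟧ = a ∧ x.val.2 = 0) ∧ (Platonic p).Adj v a) ∧
    (Finset.univ.filter
      (fun a : PlatonicVertex p => ∃ x : PlatonicPair p, ⟦x⟧ = a ∧ x.val.2 = 0)).card
        = (p - 1) / 2 ∧
    ∀ a : PlatonicVertex p, (∃ x : PlatonicPair p, ⟦x⟧ = a ∧ x.val.2 = 0) →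
      (insert a ((Platonic p).neighborFinset a)).card = p + 1 := by
  have := Fact.mk hp
  refine ⟨existsUnique_onPrincipalAxis_adj, card_filter_onPrincipalAxis hodd, fun a ha => ?_⟩
  obtain ⟨c, rfl⟩ := onPrincipalAxis_iff.1 ha
  exact card_insert_neighborFinset_axisVertex hodd c
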